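/- Let ρ be a dissectible solution notion and f : Θ → X a social choice function. Then for every nonempty E ⊆ Θ and all θ, θ' ∈ Θ: if θ ∈ E and θ' ∈ γ^{(ρ,f)}[E,θ], then θ' ∈ E and θ ∈ γ^{(ρ,f)}[E,θ']. -/

import Mathlib

open scoped Classical

namespace SeqMech

variable {I : Type*} {Θi : I → Type*} {X : Type*}

/-- Projection of a set of states onto agent `i`'s coordinate. -/
def proj (i : I) (E : Set (∀ j, Θi j)) : Set (Θi i) :=
  (fun θ => θ i) '' E

/-- Projection of a set of states onto the coordinates of the agents other than `i`. -/
def projNeg (i : I) (E : Set (∀ j, Θi j)) :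
    Set (∀ j : {j : I // j ≠ i}, Θi j.1) :=
  (fun θ (j : {j : I // j ≠ i}) => θ j.1) '' E

/-- The semi-operator property: nonempty sets are mapped to nonempty sets. -/
def IsSemiOp (γ : Set (∀ j, Θi j) → (∀ j, Θi j) → Set (∀ j, Θi j)) : Prop :=
  ∀ E θ, E.Nonempty → (γ E θ).Nonempty

/-- A solution notion: `R f γ E θ θ' i Fhat` means `ρ[f,(γ,E),θ,θ',i,Fhat] = 1`.  Its value
depends only on `(f, γ_i[E,θ], θ_i, θ'_i, Fhat_{-i})`. -/
structure SolutionNotion (I : Type*) (Θi : I → Type*) (X : Type*) where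
  R : ((∀ j, Θi j) → X) →
      (Set (∀ j, Θi j) → (∀ j, Θi j) → Set (∀ j, Θi j)) →
      Set (∀ j, Θi j) → (∀ j, Θi j) → (∀ j, Θi j) → I → Set (∀ j, Θi j) → Prop
  meas : ∀ f γ γ' E E' θ τ θ' τ' (i : I) Fhat Fhat',
      proj i (γ E θ) = proj i (γ' E' τ) →
      θ i = τ i → θ' i = τ' i →
      projNeg i Fhat = projNeg i Fhat' →
      (R f γ E θ θ' i Fhat ↔ R f γ' E' τ τ' i Fhat')

/-- Dissectibility of a solution notion. -/
def Dissectible (ρ : SolutionNotion I Θi X) : Prop :=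
  ∀ f γ E θ θ' (i : I) Fhat,
    IsSemiOp γ → E.Nonempty → θ ∈ E → θ' ∈ E →
    (¬ ρ.R f γ E θ θ' i Fhat ↔
      ∃ τ ∈ γ E θ, ∃ γ' : Set (∀ j, Θi j) → (∀ j, Θi j) → Set (∀ j, Θi j),
        IsSemiOp γ' ∧ γ' E θ = {θ, τ} ∧ ¬ ρ.R f γ' E θ θ' i Fhat)

/-- `θ >_i^{[(ρ,f),(γ,E)]} θ'`. -/
def gtRel (ρ : SolutionNotion I Θi X) (f : (∀ j, Θi j) → X)
    (γ : Set (∀ j, Θi j) → (∀ j, Θi j) → Set (∀ j, Θi j))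
    (E : Set (∀ j, Θi j)) (i : I) (θ θ' : ∀ j, Θi j) : Prop :=
  θ ∈ E ∧ θ' ∈ E ∧ ¬ ρ.R f γ E θ θ' i E

/-- `θ ∼_i^{[(ρ,f),(γ,E)]} θ'`. -/
def simRel (ρ : SolutionNotion I Θi X) (f : (∀ j, Θi j) → X)
    (γ : Set (∀ j, Θi j) → (∀ j, Θi j) → Set (∀ j, Θi j))
    (E : Set (∀ j, Θi j)) (i : I) (θ θ' : ∀ j, Θi j) : Prop :=
  θ i = θ' i ∨ gtRel ρ f γ E i θ θ' ∨ gtRel ρ f γ E i θ' θ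

/-- `canonN ρ f n` is the semi-operator `γ^{(ρ,f)-(n+1)}`. -/
noncomputable def canonN (ρ : SolutionNotion I Θi X) (f : (∀ j, Θi j) → X) :
    ℕ → Set (∀ j, Θi j) → (∀ j, Θi j) → Set (∀ j, Θi j)
  | 0 => fun E θ => if θ ∈ E then {θ} else E
  | n + 1 => fun E θ =>
      if θ ∈ E then
        ⋃ τ ∈ canonN ρ f n E θ,
          {θ' ∈ E | ∀ i, simRel ρ f (canonN ρ f n) E i τ θ'}
      else E

/-- The canonical semi-operator `γ^{(ρ,f)}`. -/
noncomputable def canon (ρ : SolutionNotion I Θi X) (f : (∀ j, Θi j) → X) :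
    Set (∀ j, Θi j) → (∀ j, Θi j) → Set (∀ j, Θi j) :=
  fun E θ => if θ ∈ E then ⋃ n, canonN ρ f n E θ else E

/-! Two states are linked when both lie in `E` and, at some finite stage `n`, they are
`∼_i`-related for every agent `i`; `γ^{(ρ,f)}[E,θ]` is then the set of states reachable from `θ`
by a chain of links. Linking is a symmetric relation, so reachability is symmetric too. The one
point that needs dissectibility is that the stages are cumulative: `>_i` at a state `θ` is
witnessed by a single element of `γ[E,θ]`, so it persists when `γ[E,θ]` grows, and
`γ^{(ρ,f)-(n)}[E,θ]` grows with `n`. -/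

section Canon

variable {ρ : SolutionNotion I Θi X} {f : (∀ j, Θi j) → X} {E : Set (∀ j, Θi j)}

lemma simRel_symm {γ : Set (∀ j, Θi j) → (∀ j, Θi j) → Set (∀ j, Θi j)} {i : I}
    {x y : ∀ j, Θi j} (h : simRel ρ f γ E i x y) : simRel ρ f γ E i y x := by
  rcases h with h | h | h
  · exact Or.inl h.symm
  · exact Or.inr (Or.inr h)
  · exact Or.inr (Or.inl h)

lemma Dissectible.gtRel_mono (hρ : Dissectible ρ)
    {γ γ' : Set (∀ j, Θi j) → (∀ j, Θi j) → Set (∀ j, Θi j)} (hγ : IsSemiOp γ)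
    (hγ' : IsSemiOp γ') {i : I} {x y : ∀ j, Θi j} (hsub : γ E x ⊆ γ' E x)
    (h : gtRel ρ f γ E i x y) : gtRel ρ f γ' E i x y := by
  obtain ⟨hx, hy, hR⟩ := h
  obtain ⟨τ, hτ, witness⟩ := (hρ f γ E x y i E hγ ⟨x, hx⟩ hx hy).1 hR
  exact ⟨hx, hy, (hρ f γ' E x y i E hγ' ⟨x, hx⟩ hx hy).2 ⟨τ, hsub hτ, witness⟩⟩

lemma Dissectible.simRel_mono (hρ : Dissectible ρ)
    {γ γ' : Set (∀ j, Θi j) → (∀ j, Θi j) → Set (∀ j, Θi j)} (hγ : IsSemiOp γ)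
    (hγ' : IsSemiOp γ') (hsub : ∀ x, γ E x ⊆ γ' E x) {i : I} {x y : ∀ j, Θi j}
    (h : simRel ρ f γ E i x y) : simRel ρ f γ' E i x y := by
  rcases h with h | h | h
  · exact Or.inl h
  · exact Or.inr (Or.inl (hρ.gtRel_mono hγ hγ' (hsub x) h))
  · exact Or.inr (Or.inr (hρ.gtRel_mono hγ hγ' (hsub y) h))

lemma mem_canonN_succ {θ θ' : ∀ j, Θi j} {n : ℕ} (hθ : θ ∈ E) :
    θ' ∈ canonN ρ f (n + 1) E θ ↔
      ∃ τ ∈ canonN ρ f n E θ, θ' ∈ E ∧ ∀ i, simRel ρ f (canonN ρ f n) E i τ θ' := by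
  simp only [canonN, if_pos hθ, Set.mem_iUnion, Set.mem_ofPred_eq, exists_prop]

lemma self_mem_canonN_zero {θ : ∀ j, Θi j} (hθ : θ ∈ E) : θ ∈ canonN ρ f 0 E θ := by
  simp [canonN, hθ]

lemma canonN_subset (θ : ∀ j, Θi j) (n : ℕ) : canonN ρ f n E θ ⊆ E := by
  by_cases hθ : θ ∈ E
  · cases n with
    | zero => simp [canonN, hθ]
    | succ n =>
      intro θ' hθ'
      obtain ⟨-, -, hθ'E, -⟩ := (mem_canonN_succ hθ).1 hθ'
      exact hθ'E
  · cases n <;> simp [canonN, hθ]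

lemma canon_subset (θ : ∀ j, Θi j) : canon ρ f E θ ⊆ E := by
  by_cases hθ : θ ∈ E
  · simpa [canon, hθ] using canonN_subset θ
  · simp only [canon, if_neg hθ, subset_rfl]

lemma monotone_canonN (θ : ∀ j, Θi j) : Monotone fun n => canonN ρ f n E θ := by
  refine monotone_nat_of_le_succ fun n => ?_
  by_cases hθ : θ ∈ E
  · intro θ' hθ'
    exact (mem_canonN_succ hθ).2 ⟨θ', hθ', canonN_subset θ n hθ', fun _ => Or.inl rfl⟩
  · cases n <;> simp [canonN, hθ]

lemma isSemiOp_canonN (n : ℕ) : IsSemiOp (canonN ρ f n) := by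
  intro F θ hF
  by_cases hθ : θ ∈ F
  · exact ⟨θ, monotone_canonN θ (Nat.zero_le n) (self_mem_canonN_zero hθ)⟩
  · cases n <;> simpa [canonN, hθ] using hF

lemma Dissectible.simRel_canonN_mono (hρ : Dissectible ρ) {n m : ℕ} (hnm : n ≤ m) {i : I}
    {x y : ∀ j, Θi j} (h : simRel ρ f (canonN ρ f n) E i x y) :
    simRel ρ f (canonN ρ f m) E i x y :=
  hρ.simRel_mono (isSemiOp_canonN n) (isSemiOp_canonN m) (fun θ => monotone_canonN θ hnm) h

def Linked (ρ : SolutionNotion I Θi X) (f : (∀ j, Θi j) → X) (E : Set (∀ j, Θi j))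
    (x y : ∀ j, Θi j) : Prop :=
  x ∈ E ∧ y ∈ E ∧ ∃ n, ∀ i, simRel ρ f (canonN ρ f n) E i x y

instance : Std.Symm (Linked ρ f E) where
  symm _ _ := fun ⟨hx, hy, n, h⟩ => ⟨hy, hx, n, fun i => simRel_symm (h i)⟩

lemma reflTransGen_linked_of_mem_canonN {θ θ' : ∀ j, Θi j} (hθ : θ ∈ E) {n : ℕ}
    (h : θ' ∈ canonN ρ f n E θ) : Relation.ReflTransGen (Linked ρ f E) θ θ' := by
  induction n generalizing θ' with
  | zero =>
    simp only [canonN, if_pos hθ, Set.mem_singleton_iff] at h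
    exact h ▸ Relation.ReflTransGen.refl
  | succ n ih =>
    obtain ⟨τ, hτ, hθ', hsim⟩ := (mem_canonN_succ hθ).1 h
    exact (ih hτ).tail ⟨canonN_subset θ n hτ, hθ', n, hsim⟩

lemma Dissectible.exists_mem_canonN_of_reflTransGen (hρ : Dissectible ρ) {θ θ' : ∀ j, Θi j}
    (hθ : θ ∈ E) (h : Relation.ReflTransGen (Linked ρ f E) θ θ') :
    ∃ n, θ' ∈ canonN ρ f n E θ := by
  induction h with
  | refl => exact ⟨0, self_mem_canonN_zero hθ⟩
  | tail _ hlink ih =>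
    obtain ⟨n, hn⟩ := ih
    obtain ⟨-, hc, m, hsim⟩ := hlink
    exact ⟨max n m + 1, (mem_canonN_succ hθ).2 ⟨_, monotone_canonN θ (le_max_left n m) hn, hc,
      fun i => hρ.simRel_canonN_mono (le_max_right n m) (hsim i)⟩⟩

lemma Dissectible.mem_canon_iff (hρ : Dissectible ρ) {θ θ' : ∀ j, Θi j} (hθ : θ ∈ E) :
    θ' ∈ canon ρ f E θ ↔ Relation.ReflTransGen (Linked ρ f E) θ θ' := by
  rw [canon, if_pos hθ, Set.mem_iUnion]
  exact ⟨fun ⟨_, hn⟩ => reflTransGen_linked_of_mem_canonN hθ hn,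
    hρ.exists_mem_canonN_of_reflTransGen hθ⟩

end Canon

theorem canon_symm_general
    (ρ : SolutionNotion I Θi X) (hρ : Dissectible ρ) (f : (∀ j, Θi j) → X)
    (E : Set (∀ j, Θi j))
    (θ θ' : ∀ j, Θi j) (hθ : θ ∈ E) (hθ' : θ' ∈ canon ρ f E θ) :
    θ' ∈ E ∧ θ ∈ canon ρ f E θ' := by
  have hθ'E : θ' ∈ E := canon_subset θ hθ'
  have hchain := (hρ.mem_canon_iff hθ).1 hθ'
  exact ⟨hθ'E, (hρ.mem_canon_iff hθ'E).2 (Std.Symm.symm _ _ hchain)⟩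

/-- symmetry of the canonical semi-operator of a dissectible solution
notion: if `θ ∈ E` and `θ' ∈ γ^{(ρ,f)}[E,θ]`, then `θ' ∈ E` and `θ ∈ γ^{(ρ,f)}[E,θ']`. -/
theorem canon_symm
    [Fintype I] [Nonempty I] [∀ i, Fintype (Θi i)] [∀ i, Nonempty (Θi i)]
    (ρ : SolutionNotion I Θi X) (hρ : Dissectible ρ) (f : (∀ j, Θi j) → X)
    (E : Set (∀ j, Θi j)) (hE : E.Nonempty)
    (θ θ' : ∀ j, Θi j) (hθ : θ ∈ E) (hθ' : θ' ∈ canon ρ f E θ) :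
    θ' ∈ E ∧ θ ∈ canon ρ f E θ' :=
  canon_symm_general ρ hρ f E θ θ' hθ hθ'

end SeqMech
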